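/- arXiv:1510.03896 — 2 statements merged into one kernel-verified Lean document; each statement's English description precedes it below -/
import Mathlib

section
/- Let n, m ≥ 1, and in the bi-non-crossing setting with n left indices 1_ℓ,…,n_ℓ and 2m right indices 1_r,…,(2m)_r, let σ_{n,m} be the bi-non-crossing partition with blocks {k_ℓ} for 1 ≤ k ≤ n and {(2k−1)_r, (2k)_r} for 1 ≤ k ≤ m. Suppose π is a bi-non-crossing partition with π ∨ σ_{n,m} equal to the one-block partition, no block of π contains both an even-indexed and an odd-indexed right node, and the block V of π containing 1_ℓ contains some even-indexed right node (2k)_r. Then V contains (2m)_r and all of the left nodes 1_ℓ, 2_ℓ, …, n_ℓ. -/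
/-- A partition of `Fin m` (encoded as a `Setoid`) is non-crossing if there are no
`a < b < c < d` with `a, c` in one block and `b, d` in a different block. -/
def NonCrossingPart {m : ℕ} (π : Setoid (Fin m)) : Prop :=
  ∀ a b c d : Fin m, a < b → b < c → c < d → π.r a c → π.r b d → π.r a b

/-- The permutation-reordering `s_χ` for the `χ` with `n` left indices `1_ℓ,…,n_ℓ`
(the first `n` elements of `Fin (n + 2m)`) and `2m` right indices `1_r,…,(2m)_r`
(the remaining elements): left indices are kept in increasing order, right indices are
read in decreasing order. -/
def sChi (n m : ℕ) : Fin (n + 2 * m) → Fin (n + 2 * m) := fun q =>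
  if h : q.val < n then q
  else ⟨n + (2 * m - 1 - (q.val - n)), by have := q.isLt; omega⟩

/-- `π` is bi-non-crossing: it becomes non-crossing after reordering via `s_χ`. -/
def IsBNCnm (n m : ℕ) (π : Setoid (Fin (n + 2 * m))) : Prop :=
  NonCrossingPart (Setoid.comap (sChi n m) π)

/-!
Let `u` be the largest right node in the block `V` of `1_ℓ`; by the parity hypothesis its
offset is odd, so no `σ_{n,m}`-pair straddles `u`. If `u` were not the last node `(2m)_r`, the
nodes `π`-connected to a right node above `u` could not meet a right node at or below `u`
without crossing `V`, hence would form a proper nonempty set saturated for both `π` and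
`σ_{n,m}`, contradicting `π ∨ σ_{n,m} = 1`. Once `(2m)_r ∈ V`, the block of a left node `k_ℓ`
outside `V` cannot reach the right side without crossing `V`, so it is a union of singletons
of `σ_{n,m}` and the same contradiction arises.
-/

lemma Setoid.mem_iff_mem_of_sup_eq_top {α : Type*} {r s : Setoid α} (h : r ⊔ s = ⊤)
    {S : Set α} (hr : ∀ x y, r x y → x ∈ S → y ∈ S) (hs : ∀ x y, s x y → x ∈ S → y ∈ S)
    (x y : α) : x ∈ S ↔ y ∈ S := by
  have hle : r ⊔ s ≤ Setoid.ker (· ∈ S) :=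
    sup_le (fun a b hab => propext ⟨hr a b hab, hr b a (r.symm' hab)⟩)
      (fun a b hab => propext ⟨hs a b hab, hs b a (s.symm' hab)⟩)
  rw [h] at hle
  exact (Setoid.ker_def.1 (hle trivial)).to_iff

section BiNonCrossing

variable {n m : ℕ}

/-- The partition `σ_{n,m}`: singletons on the left, pairs `{(2k-1)_r, (2k)_r}` on the right. -/
def pairSetoid (n m : ℕ) : Setoid (Fin (n + 2 * m)) :=
  Setoid.ker fun q : Fin (n + 2 * m) => if q.val < n then q.val else n + (q.val - n) / 2

lemma pairSetoid_eq_of_lt {x y : Fin (n + 2 * m)} (h : pairSetoid n m x y) (hx : x.val < n) :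
    y = x := by
  rw [pairSetoid, Setoid.ker_def] at h
  ext
  split_ifs at h <;> omega

lemma pairSetoid_of_le {x y : Fin (n + 2 * m)} (h : pairSetoid n m x y) (hx : n ≤ x.val) :
    n ≤ y.val ∧ (y.val - n) / 2 = (x.val - n) / 2 := by
  rw [pairSetoid, Setoid.ker_def] at h
  split_ifs at h <;> omega

lemma val_sChi (q : Fin (n + 2 * m)) :
    (sChi n m q).val = if q.val < n then q.val else 2 * n + 2 * m - 1 - q.val := by
  unfold sChi
  split_ifs
  · rfl
  · simp only
    omega

lemma sChi_involutive : Function.Involutive (sChi n m) := fun q => by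
  have := q.isLt
  ext
  simp only [val_sChi]
  split_ifs <;> omega

variable {π : Setoid (Fin (n + 2 * m))}

lemma IsBNCnm.rel_of_crossing (hπ : IsBNCnm n m π) {a b c d : Fin (n + 2 * m)}
    (hab : sChi n m a < sChi n m b) (hbc : sChi n m b < sChi n m c)
    (hcd : sChi n m c < sChi n m d) (hac : π a c) (hbd : π b d) : π a b := by
  have key := hπ _ _ _ _ hab hbc hcd
  simp only [Setoid.comap_rel, sChi_involutive _] at key
  exact key hac hbd

lemma IsBNCnm.rel_right_of_crossing (hπ : IsBNCnm n m π) {a x u y : Fin (n + 2 * m)}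
    (ha : a.val < n) (hx : n ≤ x.val) (hxu : x < u) (huy : u < y) (hau : π a u)
    (hyx : π y x) : π a y := by
  have := y.isLt
  rw [Fin.lt_def] at hxu huy
  refine hπ.rel_of_crossing (c := u) (d := x) ?_ ?_ ?_ hau hyx <;>
    simp only [Fin.lt_def, val_sChi] <;> split_ifs <;> omega

lemma IsBNCnm.rel_left_of_crossing (hπ : IsBNCnm n m π) {a k x L : Fin (n + 2 * m)}
    (hak : a < k) (hk : k.val < n) (hx : n ≤ x.val) (hxL : x < L) (haL : π a L)
    (hkx : π k x) : π a k := by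
  have := L.isLt
  rw [Fin.lt_def] at hak hxL
  refine hπ.rel_of_crossing (c := L) (d := x) ?_ ?_ ?_ haL hkx <;>
    simp only [Fin.lt_def, val_sChi] <;> split_ifs <;> omega

lemma IsBNCnm.rel_last_of_maximal (hπ : IsBNCnm n m π) (hjoin : π ⊔ pairSetoid n m = ⊤)
    {a u L : Fin (n + 2 * m)} (ha : a.val < n) (hu : n ≤ u.val) (hodd : (u.val - n) % 2 = 1)
    (hL : L.val = n + 2 * m - 1) (hau : π a u) (hmax : ∀ y, u < y → ¬ π a y) : π a L := by
  by_contra haL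
  have huL : u < L :=
    lt_of_le_of_ne (Fin.le_def.2 (by have := u.isLt; omega)) fun huL => haL (huL ▸ hau)
  let S : Set (Fin (n + 2 * m)) := {x | ∃ y, u < y ∧ π x y}
  have hS_right : ∀ x ∈ S, n ≤ x.val → u < x := by
    rintro x ⟨y, huy, hxy⟩ hx
    by_contra! hxu
    rcases hxu.lt_or_eq with hxu | rfl
    · exact hmax y huy (hπ.rel_right_of_crossing ha hx hxu huy hau (π.symm' hxy))
    · exact hmax y huy (π.trans' hau hxy)
  have hπS : ∀ x y, π x y → x ∈ S → y ∈ S := by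
    rintro x y hxy ⟨z, huz, hxz⟩
    exact ⟨z, huz, π.trans' (π.symm' hxy) hxz⟩
  -- `u` closes its `σ_{n,m}`-pair, so the partner of a right node above `u` is above `u`.
  have hσS : ∀ x y, pairSetoid n m x y → x ∈ S → y ∈ S := by
    intro x y hxy hxS
    rcases Nat.lt_or_ge x.val n with hx | hx
    · exact pairSetoid_eq_of_lt hxy hx ▸ hxS
    · obtain ⟨hy, hyx⟩ := pairSetoid_of_le hxy hx
      have hux := hS_right x hxS hx
      rw [Fin.lt_def] at hux
      exact ⟨y, Fin.lt_def.2 (by omega), π.refl' y⟩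
  obtain ⟨y, huy, hay⟩ :=
    (Setoid.mem_iff_mem_of_sup_eq_top hjoin hπS hσS a L).2 ⟨L, huL, π.refl' L⟩
  exact hmax y huy hay

lemma IsBNCnm.rel_left_of_rel_last (hπ : IsBNCnm n m π) (hjoin : π ⊔ pairSetoid n m = ⊤)
    {a k L : Fin (n + 2 * m)} (hak : a < k) (hk : k.val < n) (hL : L.val = n + 2 * m - 1)
    (haL : π a L) : π a k := by
  by_contra hak'
  let S : Set (Fin (n + 2 * m)) := {x | π x k}
  have hS_left : ∀ x ∈ S, x.val < n := by
    intro x hxk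
    by_contra! hx
    have hxL : x ≤ L := Fin.le_def.2 (by have := x.isLt; omega)
    rcases hxL.lt_or_eq with hxL | rfl
    · exact hak' (hπ.rel_left_of_crossing hak hk hx hxL haL (π.symm' hxk))
    · exact hak' (π.trans' haL hxk)
  have hπS : ∀ x y, π x y → x ∈ S → y ∈ S := fun x y hxy hxk => π.trans' (π.symm' hxy) hxk
  have hσS : ∀ x y, pairSetoid n m x y → x ∈ S → y ∈ S := fun x y hxy hxS =>
    pairSetoid_eq_of_lt hxy (hS_left x hxS) ▸ hxS
  exact hak' ((Setoid.mem_iff_mem_of_sup_eq_top hjoin hπS hσS a k).2 (π.refl' k))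

end BiNonCrossing

/-- Let `n, m ≥ 1`, and in the bi-non-crossing setting with `n` left
indices `1_ℓ,…,n_ℓ` and `2m` right indices `1_r,…,(2m)_r`, let `σ_{n,m}` be the
bi-non-crossing partition with blocks `{k_ℓ}` for `1 ≤ k ≤ n` and `{(2k−1)_r, (2k)_r}` for
`1 ≤ k ≤ m` (encoded as the kernel of the displayed map).  Suppose `π` is a bi-non-crossing
partition with `π ∨ σ_{n,m}` equal to the one-block partition `⊤`, no block of `π` contains
both an even-indexed and an odd-indexed right node, and the block `V` of `π` containing
`1_ℓ` contains some even-indexed right node `(2k)_r`.  Then `V` contains `(2m)_r` and all of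
the left nodes `1_ℓ, 2_ℓ, …, n_ℓ`. -/
theorem stmt15 (n m : ℕ) (hn : 0 < n) (hm : 0 < m)
    (π : Setoid (Fin (n + 2 * m)))
    (hbnc : IsBNCnm n m π)
    (hjoin : π ⊔ Setoid.ker
        (fun q : Fin (n + 2 * m) => if q.val < n then q.val else n + (q.val - n) / 2) = ⊤)
    (hpar : ∀ i j : Fin (n + 2 * m), n ≤ i.val → n ≤ j.val → π.r i j →
        (i.val - n) % 2 = (j.val - n) % 2)
    (heven : ∃ j : Fin (n + 2 * m), n ≤ j.val ∧ (j.val - n) % 2 = 1 ∧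
        π.r ⟨0, by omega⟩ j) :
    π.r ⟨0, by omega⟩ ⟨n + 2 * m - 1, by omega⟩ ∧
    (∀ k : ℕ, ∀ hk : k < n, π.r ⟨0, by omega⟩ ⟨k, by omega⟩) := by
  classical
  obtain ⟨j, hjn, hjodd, h0j⟩ := heven
  obtain ⟨u, hu, humax⟩ := (Finset.univ.filter fun q : Fin (n + 2 * m) =>
      n ≤ q.val ∧ π ⟨0, by omega⟩ q).exists_max_image id ⟨j, by simpa using ⟨hjn, h0j⟩⟩
  simp only [Finset.mem_filter, Finset.mem_univ, true_and, id] at hu humax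
  obtain ⟨hun, h0u⟩ := hu
  have hodd : (u.val - n) % 2 = 1 := hpar j u hjn hun (π.trans' (π.symm' h0j) h0u) ▸ hjodd
  have hlast := hbnc.rel_last_of_maximal hjoin (L := ⟨n + 2 * m - 1, by omega⟩)
    hn hun hodd rfl h0u fun y huy h0y =>
      absurd (humax y ⟨(Fin.lt_def.1 huy).le.trans' hun, h0y⟩) (not_le.2 huy)
  refine ⟨hlast, fun k hk => ?_⟩
  rcases Nat.eq_zero_or_pos k with rfl | hk0
  · exact π.refl' _
  · exact hbnc.rel_left_of_rel_last hjoin (Fin.mk_lt_mk.2 hk0) hk rfl hlast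
end

section
/- Let (A, E, ε) be a B-B-non-commutative probability space and let χ : {1,…,n} → {ℓ,r} with n ≥ 2. If there exist q ∈ {1,…,n} and b ∈ B such that Z_q = L_b when χ(q) = ℓ, or Z_q = R_b when χ(q) = r, then the full operator-valued bi-free cumulant vanishes: κ^B_χ(Z₁,…,Z_n) = 0 for all Z_k ∈ A_{χ(k)}. -/
open scoped Classical

noncomputable section

/-- The rank of an index in the `≺_χ` order: left indices (`χ = true`) in increasing order
first, followed by right indices (`χ = false`) in decreasing order.  So
`i ≺_χ j ↔ chiRank χ i < chiRank χ j`. -/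
def chiRank {n : ℕ} (χ : Fin n → Bool) (i : Fin n) : ℕ :=
  if χ i = true then (Finset.univ.filter fun k : Fin n => χ k = true ∧ k < i).card
  else (Finset.univ.filter fun k : Fin n => χ k = true).card +
    (Finset.univ.filter fun k : Fin n => χ k = false ∧ i < k).card

/-- `π` is bi-non-crossing with respect to `χ`: it is non-crossing in the `≺_χ` order,
i.e. `s_χ⁻¹ · π` is non-crossing. -/
def IsBNC {n : ℕ} (χ : Fin n → Bool) (π : Setoid (Fin n)) : Prop :=
  ∀ a b c d : Fin n, chiRank χ a < chiRank χ b → chiRank χ b < chiRank χ c →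
    chiRank χ c < chiRank χ d → π.r a c → π.r b d → π.r a b

/-- `V` is a `χ`-interval: an interval with respect to the `≺_χ` order. -/
def ChiInterval {n : ℕ} (χ : Fin n → Bool) (V : Finset (Fin n)) : Prop :=
  ∀ x ∈ V, ∀ z ∈ V, ∀ y : Fin n,
    chiRank χ x ≤ chiRank χ y → chiRank χ y ≤ chiRank χ z → y ∈ V

/-- `V` is a union of blocks of `π`. -/
def UnionOfBlocks {n : ℕ} (π : Setoid (Fin n)) (V : Finset (Fin n)) : Prop :=
  ∀ x ∈ V, ∀ y : Fin n, π.r x y → y ∈ V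

/-- The increasing enumeration of `V ⊆ Fin n`, used to restrict tuples/partitions to `V`. -/
def restFin {n : ℕ} (V : Finset (Fin n)) : Fin V.card → Fin n :=
  fun a => ((V.orderIsoOfFin rfl) a).1

/-- A `B`-`B`-non-commutative probability space: a unital algebra `A`, a pair of commuting
injective unital homomorphisms `L : B → A` and `R : Bᵐᵒᵖ → A` (encoding
`ε : B ⊗ B^op → A`, `L_b = ε(b⊗1)`, `R_b = ε(1⊗b)`), and a linear map `E : A → B` with
`E(ε(b₁⊗b₂)Z) = b₁ E(Z) b₂` and `E(Z L_b) = E(Z R_b)`. -/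
structure BBNCPS (B : Type) [Ring B] [Algebra ℂ B] : Type 1 where
  A : Type
  [ringA : Ring A]
  [algA : Algebra ℂ A]
  L : B →ₐ[ℂ] A
  R : Bᵐᵒᵖ →ₐ[ℂ] A
  comm : ∀ (b₁ : B) (b₂ : Bᵐᵒᵖ), L b₁ * R b₂ = R b₂ * L b₁
  Linj : Function.Injective L
  Rinj : Function.Injective R
  E : A →ₗ[ℂ] B
  E_mul : ∀ (b₁ b₂ : B) (Z : A), E (L b₁ * R (MulOpposite.op b₂) * Z) = b₁ * E Z * b₂
  E_swap : ∀ (Z : A) (b : B), E (Z * L b) = E (Z * R (MulOpposite.op b))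

attribute [instance] BBNCPS.ringA BBNCPS.algA

variable {B : Type} [Ring B] [Algebra ℂ B]

/-- The tuple `Z` is compatible with the side function `χ`: entries with `χ k = ℓ` lie in
the left algebra `A_ℓ` (they commute with all `R_b`), entries with `χ k = r` lie in the
right algebra `A_r` (they commute with all `L_b`). -/
def SideOK (P : BBNCPS B) {n : ℕ} (χ : Fin n → Bool) (Z : Fin n → P.A) : Prop :=
  ∀ k : Fin n,
    (χ k = true → ∀ b : B, Z k * P.R (MulOpposite.op b) = P.R (MulOpposite.op b) * Z k) ∧
    (χ k = false → ∀ b : B, Z k * P.L b = P.L b * Z k)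

/-- `Eb` agrees with the moment function on full partitions:
`E^B_{1_χ}(Z₁,…,Z_n) = E(Z₁⋯Z_n)`. -/
def AnchorsTop (P : BBNCPS B)
    (Eb : (n : ℕ) → (Fin n → Bool) → Setoid (Fin n) → (Fin n → P.A) → B) : Prop :=
  ∀ (n : ℕ) (χ : Fin n → Bool) (Z : Fin n → P.A),
    Eb n χ ⊤ Z = P.E (((List.finRange n).map Z).prod)

/-- Bi-multiplicativity, property (3): if `V₁,…,V_m` are unions of blocks of `π` and
`χ`-intervals partitioning `{1,…,n}`, ordered by `≺_χ`, then
`E^B_π(Z) = E^B_{π|V₁}(Z|V₁) ⋯ E^B_{π|V_m}(Z|V_m)`. -/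
def FactorsOverIntervals (P : BBNCPS B)
    (Eb : (n : ℕ) → (Fin n → Bool) → Setoid (Fin n) → (Fin n → P.A) → B) : Prop :=
  ∀ (n : ℕ) (χ : Fin n → Bool) (π : Setoid (Fin n)) (Z : Fin n → P.A),
    SideOK P χ Z → IsBNC χ π →
    ∀ (m : ℕ) (Vs : Fin m → Finset (Fin n)),
      (∀ k : Fin n, ∃! i : Fin m, k ∈ Vs i) →
      (∀ i, (Vs i).Nonempty) →
      (∀ i, UnionOfBlocks π (Vs i)) →
      (∀ i, ChiInterval χ (Vs i)) →
      (∀ i j : Fin m, i < j → ∀ x ∈ Vs i, ∀ y ∈ Vs j, chiRank χ x < chiRank χ y) →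
      Eb n χ π Z =
        ((List.finRange m).map fun i =>
          Eb (Vs i).card (χ ∘ restFin (Vs i)) (Setoid.comap (restFin (Vs i)) π)
            (Z ∘ restFin (Vs i))).prod

/-- Bi-multiplicativity, property (4): if `V, W` are unions of blocks of `π` partitioning
`{1,…,n}`, `V` is a `χ`-interval, the `≺_χ`-minimum and `≺_χ`-maximum lie in `W`, and `p`
is the `≺_χ`-largest element of `W` preceding `V`, then `E^B_π(Z)` is obtained by evaluating
`E^B_{π|V}(Z|V)`, multiplying it into position `p` (as `Z_p L_{·}` if `χ(p) = ℓ`, as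
`R_{·} Z_p` if `χ(p) = r`), and applying `E^B_{π|W}` to the resulting restricted tuple. -/
def NestsOverIntervals (P : BBNCPS B)
    (Eb : (n : ℕ) → (Fin n → Bool) → Setoid (Fin n) → (Fin n → P.A) → B) : Prop :=
  ∀ (n : ℕ) (χ : Fin n → Bool) (π : Setoid (Fin n)) (Z : Fin n → P.A),
    SideOK P χ Z → IsBNC χ π →
    ∀ (V W : Finset (Fin n)), V.Nonempty → W.Nonempty → Disjoint V W →
      V ∪ W = Finset.univ → UnionOfBlocks π V → UnionOfBlocks π W → ChiInterval χ V →
      (∃ w ∈ W, ∀ v ∈ V, chiRank χ v < chiRank χ w) →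
      ∀ p : Fin n, p ∈ W → (∀ v ∈ V, chiRank χ p < chiRank χ v) →
        (∀ w ∈ W, (∀ v ∈ V, chiRank χ w < chiRank χ v) → chiRank χ w ≤ chiRank χ p) →
        Eb n χ π Z =
          Eb W.card (χ ∘ restFin W) (Setoid.comap (restFin W) π)
            ((Function.update Z p
              (if χ p then
                Z p * P.L (Eb V.card (χ ∘ restFin V) (Setoid.comap (restFin V) π)
                  (Z ∘ restFin V))
               else
                P.R (MulOpposite.op (Eb V.card (χ ∘ restFin V)
                  (Setoid.comap (restFin V) π) (Z ∘ restFin V))) * Z p)) ∘ restFin W)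

/-- `μ` is the bi-non-crossing Möbius function: it vanishes on non-refinements and
satisfies the defining recursions on each lattice `BNC(χ)`. -/
def MoebiusBNC (μ : (n : ℕ) → (Fin n → Bool) → Setoid (Fin n) → Setoid (Fin n) → ℂ) :
    Prop :=
  (∀ (n : ℕ) (χ : Fin n → Bool) (π σ : Setoid (Fin n)), ¬ π ≤ σ → μ n χ π σ = 0) ∧
  (∀ (n : ℕ) (χ : Fin n → Bool) (π σ : Setoid (Fin n)),
    IsBNC χ π → IsBNC χ σ → π ≤ σ →
    (∑ᶠ τ ∈ {τ : Setoid (Fin n) | IsBNC χ τ ∧ π ≤ τ ∧ τ ≤ σ}, μ n χ τ σ)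
      = if π = σ then 1 else 0) ∧
  (∀ (n : ℕ) (χ : Fin n → Bool) (π σ : Setoid (Fin n)),
    IsBNC χ π → IsBNC χ σ → π ≤ σ →
    (∑ᶠ τ ∈ {τ : Setoid (Fin n) | IsBNC χ τ ∧ π ≤ τ ∧ τ ≤ σ}, μ n χ π τ)
      = if π = σ then 1 else 0)

/-!
Write `σ̂ = σ.isolate q` for `σ` with `q` split off into a singleton block. The heart of the proof
is that `E^B_σ(Z) = E^B_σ̂(Z)` for every bi-non-crossing `σ`. For `σ = 1_χ` this is a direct
computation: `L_b` (resp. `R_b`) commutes with every right (resp. left) variable, so it can be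
slid next to the `≺_χ`-predecessor of `q`, or to an end of the word where `E` absorbs it, which is
exactly what bi-multiplicativity prescribes for `σ̂`. For `σ ≠ 1_χ`, `σ` splits off a proper
`≺_χ`-interval that is a union of blocks (either an initial segment or a gap inside the block of
the `≺_χ`-minimum), and bi-multiplicativity plus induction on `n` finish.

Grouping the cumulant along the fibres of `σ ↦ σ̂` then leaves the sums
`Σ_{σ̂ = τ} μ(σ, 1_χ)`, which vanish by downward induction on `τ` from the Möbius recursion,
because `σ ↦ σ̂` is monotone, idempotent and deflationary, and moves `1_χ` when `n ≥ 2`.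
-/

section ChiOrder

lemma card_filter_lt_card_filter {α : Type*} [Fintype α] {p r : α → Prop} [DecidablePred p]
    [DecidablePred r] (hpr : ∀ k, p k → r k) {x : α} (hr : r x) (hp : ¬ p x) :
    (Finset.univ.filter p).card < (Finset.univ.filter r).card :=
  Finset.card_lt_card <| Finset.ssubset_iff_of_subset (fun k hk => by simp_all) |>.2
    ⟨x, by simpa using hr, by simpa using hp⟩

variable {n : ℕ} {χ : Fin n → Bool}

lemma chiRank_lt_of_left_of_left {x y : Fin n} (hx : χ x = true) (hy : χ y = true)
    (h : x < y) : chiRank χ x < chiRank χ y := by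
  simp only [chiRank, hx, hy, if_true]
  exact card_filter_lt_card_filter (fun k hk => ⟨hk.1, hk.2.trans h⟩) ⟨hx, h⟩ (by simp)

lemma chiRank_lt_of_right_of_right {x y : Fin n} (hx : χ x = false) (hy : χ y = false)
    (h : y < x) : chiRank χ x < chiRank χ y := by
  simp only [chiRank, hx, hy, Bool.false_eq_true, if_false]
  exact Nat.add_lt_add_left
    (card_filter_lt_card_filter (fun k hk => ⟨hk.1, h.trans hk.2⟩) ⟨hx, h⟩ (by simp)) _

lemma chiRank_lt_of_left_of_right {x y : Fin n} (hx : χ x = true) (hy : χ y = false) :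
    chiRank χ x < chiRank χ y := by
  simp only [chiRank, hx, hy, Bool.false_eq_true, if_true, if_false]
  exact lt_of_lt_of_le (card_filter_lt_card_filter (fun k hk => hk.1) hx (by simp))
    (Nat.le_add_right _ _)

lemma chiRank_lt_iff {x y : Fin n} :
    chiRank χ x < chiRank χ y ↔
      (χ x = true ∧ χ y = true ∧ x < y) ∨ (χ x = false ∧ χ y = false ∧ y < x) ∨
        (χ x = true ∧ χ y = false) := by
  refine ⟨fun h => ?_, ?_⟩
  · obtain rfl | hne := eq_or_ne x y
    · exact absurd h (lt_irrefl _)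
    rcases hne.lt_or_gt with hxy | hxy <;> cases hx : χ x <;> cases hy : χ y <;>
      simp only [hxy, and_self, or_true, true_or, and_true, false_and, or_false,
        Bool.true_eq_false, Bool.false_eq_true] <;>
      first
        | exact absurd h (chiRank_lt_of_left_of_left hy hx hxy).not_gt
        | exact absurd h (chiRank_lt_of_right_of_right hy hx hxy).not_gt
        | exact absurd h (chiRank_lt_of_left_of_right hy hx).not_gt
  · rintro (⟨hx, hy, h⟩ | ⟨hx, hy, h⟩ | ⟨hx, hy⟩)
    · exact chiRank_lt_of_left_of_left hx hy h
    · exact chiRank_lt_of_right_of_right hx hy h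
    · exact chiRank_lt_of_left_of_right hx hy

lemma chiRank_injective : Function.Injective (chiRank χ) := by
  intro x y h
  by_contra hne
  have hxy := (chiRank_lt_iff (χ := χ) (x := x) (y := y)).not.mp (by omega)
  have hyx := (chiRank_lt_iff (χ := χ) (x := y) (y := x)).not.mp (by omega)
  rcases Ne.lt_or_gt hne with hlt | hlt <;> cases hx : χ x <;> cases hy : χ y <;> simp_all

end ChiOrder

namespace Setoid

variable {α β : Type*}

instance [Finite α] : Finite (Setoid α) :=
  Finite.of_injective (fun σ : Setoid α => σ.r) fun _ _ h =>
    Setoid.ext fun x y => iff_of_eq (congrFun₂ h x y)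

noncomputable instance [Finite α] : Fintype (Setoid α) := Fintype.ofFinite _

def isolate (q : α) (σ : Setoid α) : Setoid α where
  r x y := x = y ∨ (x ≠ q ∧ y ≠ q ∧ σ.r x y)
  iseqv := by
    refine ⟨fun x => Or.inl rfl, ?_, ?_⟩
    · rintro x y (rfl | ⟨hx, hy, h⟩)
      · exact Or.inl rfl
      · exact Or.inr ⟨hy, hx, σ.symm h⟩
    · rintro x y z (rfl | ⟨hx, hy, h⟩) h'
      · exact h'
      · rcases h' with rfl | ⟨-, hz, h'⟩
        exacts [Or.inr ⟨hx, hy, h⟩, Or.inr ⟨hx, hz, σ.trans h h'⟩]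

variable {q : α} {σ : Setoid α}

theorem isolate_le : σ.isolate q ≤ σ := by
  rintro x y (rfl | ⟨-, -, h⟩)
  exacts [σ.refl x, h]

theorem isolate_mono : Monotone (isolate q) := by
  rintro σ τ h x y (rfl | ⟨hx, hy, hxy⟩)
  exacts [Or.inl rfl, Or.inr ⟨hx, hy, h hxy⟩]

theorem isolate_isolate : (σ.isolate q).isolate q = σ.isolate q :=
  le_antisymm isolate_le fun _ _ h =>
    h.elim Or.inl fun ⟨hx, hy, _⟩ => Or.inr ⟨hx, hy, h⟩

theorem isolate_eq_self [Subsingleton α] : σ.isolate q = σ :=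
  le_antisymm isolate_le fun x y _ => Or.inl (Subsingleton.elim x y)

theorem isolate_top_ne_top [Nontrivial α] (q : α) : (⊤ : Setoid α).isolate q ≠ ⊤ := by
  obtain ⟨x, hx⟩ := exists_ne q
  intro h
  have hqx : ((⊤ : Setoid α).isolate q).r q x := by rw [h]; trivial
  rcases hqx with hqx | ⟨hq, -, -⟩
  exacts [hx hqx.symm, hq rfl]

theorem comap_isolate_of_forall_ne {f : β → α} (hf : ∀ a, f a ≠ q) :
    (σ.isolate q).comap f = σ.comap f :=
  le_antisymm (fun _ _ h => isolate_le h) fun x y h => Or.inr ⟨hf x, hf y, h⟩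

theorem comap_isolate_of_apply_eq {f : β → α} (hf : Function.Injective f) {a : β} (ha : f a = q) :
    (σ.isolate q).comap f = (σ.comap f).isolate a := by
  ext x y
  change f x = f y ∨ (f x ≠ q ∧ f y ≠ q ∧ _) ↔ x = y ∨ (x ≠ a ∧ y ≠ a ∧ _)
  rw [← ha, hf.eq_iff, hf.ne_iff, hf.ne_iff]
  exact Iff.rfl

end Setoid

section Restriction

variable {n : ℕ}

lemma restFin_strictMono (V : Finset (Fin n)) : StrictMono (restFin V) :=
  fun _ _ h => (V.orderIsoOfFin rfl).strictMono h

lemma restFin_mem (V : Finset (Fin n)) (a : Fin V.card) : restFin V a ∈ V :=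
  ((V.orderIsoOfFin rfl) a).2

lemma exists_restFin_eq {V : Finset (Fin n)} {x : Fin n} (hx : x ∈ V) : ∃ a, restFin V a = x :=
  ⟨(V.orderIsoOfFin rfl).symm ⟨x, hx⟩, by simp [restFin]⟩

lemma map_restFin_finRange (V : Finset (Fin n)) :
    (List.finRange V.card).map (restFin V) = (List.finRange n).filter (· ∈ V) :=
  ((List.pairwise_lt_finRange _).map _ fun _ _ h => restFin_strictMono V h).eq_of_mem_iff
    ((List.pairwise_lt_finRange n).filter _) fun x => by
      simpa using ⟨fun ⟨a, ha⟩ => ha ▸ restFin_mem V a, exists_restFin_eq⟩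

end Restriction

section BiNonCrossing

variable {m n : ℕ} {χ : Fin n → Bool} {σ : Setoid (Fin n)}

lemma isBNC_top : IsBNC χ ⊤ := fun _ _ _ _ _ _ _ _ _ => trivial

lemma IsBNC.isolate (hσ : IsBNC χ σ) (q : Fin n) : IsBNC χ (σ.isolate q) := by
  rintro a b c d hab hbc hcd (rfl | ⟨ha, -, hac⟩) (rfl | ⟨hb, -, hbd⟩)
  · omega
  · omega
  · omega
  · exact Or.inr ⟨ha, hb, hσ a b c d hab hbc hcd hac hbd⟩

lemma chiRank_comp_lt_iff {f : Fin m → Fin n} (hf : StrictMono f) {a b : Fin m} :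
    chiRank (χ ∘ f) a < chiRank (χ ∘ f) b ↔ chiRank χ (f a) < chiRank χ (f b) := by
  simp only [chiRank_lt_iff, Function.comp_apply, hf.lt_iff_lt]

lemma IsBNC.comap (hσ : IsBNC χ σ) {f : Fin m → Fin n} (hf : StrictMono f) :
    IsBNC (χ ∘ f) (σ.comap f) := by
  intro a b c d hab hbc hcd
  rw [chiRank_comp_lt_iff hf] at hab hbc hcd
  exact hσ _ _ _ _ hab hbc hcd

end BiNonCrossing

section OrderedProd

variable {M : Type*} [Monoid M] {n : ℕ}

def orderedProd (Z : Fin n → M) (s : Finset (Fin n)) : M :=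
  (((List.finRange n).filter (· ∈ s)).map Z).prod

variable {Z : Fin n → M} {s t : Finset (Fin n)} {a : M}

lemma orderedProd_univ : orderedProd Z Finset.univ = ((List.finRange n).map Z).prod := by
  simp [orderedProd]

lemma orderedProd_union (h : ∀ x ∈ s, ∀ y ∈ t, x < y) :
    orderedProd Z (s ∪ t) = orderedProd Z s * orderedProd Z t := by
  have hsplit : (List.finRange n).filter (· ∈ s ∪ t) =
      (List.finRange n).filter (· ∈ s) ++ (List.finRange n).filter (· ∈ t) :=
    ((List.pairwise_lt_finRange n).filter _).eq_of_mem_iff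
      (List.pairwise_append.2 ⟨(List.pairwise_lt_finRange n).filter _,
        (List.pairwise_lt_finRange n).filter _,
        fun x hx y hy => h x (by simpa using hx) y (by simpa using hy)⟩)
      fun x => by simp
  rw [orderedProd, hsplit, List.map_append, List.prod_append]
  rfl

lemma orderedProd_singleton (x : Fin n) : orderedProd Z {x} = Z x := by
  have : (List.finRange n).filter (· ∈ ({x} : Finset (Fin n))) = [x] :=
    ((List.pairwise_lt_finRange n).filter _).eq_of_mem_iff (List.pairwise_singleton _ _)
      fun y => by simp
  rw [orderedProd, this]
  simp

lemma orderedProd_eq_mul_mul {p : Fin n} (hp : p ∈ s) :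
    orderedProd Z s = orderedProd Z {x ∈ s | x < p} * Z p * orderedProd Z {x ∈ s | p < x} := by
  have hs : s = {x ∈ s | x < p} ∪ ({p} ∪ {x ∈ s | p < x}) := by
    ext x
    simp only [Finset.mem_union, Finset.mem_filter, Finset.mem_singleton]
    grind
  conv_lhs => rw [hs]
  rw [orderedProd_union, orderedProd_union, orderedProd_singleton, mul_assoc]
  · simp +contextual
  · simp only [Finset.mem_filter, Finset.mem_union, Finset.mem_singleton]
    grind

lemma orderedProd_erase (p : Fin n) :
    orderedProd Z (s.erase p) = orderedProd Z {x ∈ s | x < p} * orderedProd Z {x ∈ s | p < x} := by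
  have hs : s.erase p = {x ∈ s | x < p} ∪ {x ∈ s | p < x} := by
    ext x
    simp only [Finset.mem_erase, Finset.mem_union, Finset.mem_filter]
    grind
  rw [hs, orderedProd_union]
  simp only [Finset.mem_filter]
  grind

lemma orderedProd_update_of_notMem {p : Fin n} (hp : p ∉ s) (c : M) :
    orderedProd (Function.update Z p c) s = orderedProd Z s := by
  unfold orderedProd
  congr 1
  refine List.map_congr_left fun k hk => Function.update_of_ne ?_ _ _
  rintro rfl
  simp_all

lemma Commute.orderedProd_right (h : ∀ k ∈ s, Commute a (Z k)) : Commute a (orderedProd Z s) :=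
  Commute.list_prod_right _ _ fun x hx => by
    obtain ⟨k, hk, rfl⟩ := List.mem_map.1 hx
    exact h k (by simpa using hk)

lemma orderedProd_mul_eq {p : Fin n} (hp : p ∈ s) (h : ∀ k ∈ s, p < k → Commute a (Z k)) :
    orderedProd Z s * a = orderedProd (Function.update Z p (Z p * a)) s := by
  have hY : Commute a (orderedProd Z {x ∈ s | p < x}) :=
    Commute.orderedProd_right fun k hk => by
      simp only [Finset.mem_filter] at hk
      exact h k hk.1 hk.2
  rw [orderedProd_eq_mul_mul hp, orderedProd_eq_mul_mul (Z := Function.update Z p _) hp,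
    orderedProd_update_of_notMem (by simp), orderedProd_update_of_notMem (by simp),
    Function.update_self, mul_assoc, ← hY.eq, ← mul_assoc, ← mul_assoc]

lemma mul_orderedProd_eq {q : Fin n} (hq : q ∈ s) (h : ∀ k ∈ s, k < q → Commute a (Z k)) :
    a * orderedProd Z s = orderedProd (Function.update Z q (a * Z q)) s := by
  have hX : Commute a (orderedProd Z {x ∈ s | x < q}) :=
    Commute.orderedProd_right fun k hk => by
      simp only [Finset.mem_filter] at hk
      exact h k hk.1 hk.2
  rw [orderedProd_eq_mul_mul hq, orderedProd_eq_mul_mul (Z := Function.update Z q _) hq,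
    orderedProd_update_of_notMem (by simp), orderedProd_update_of_notMem (by simp),
    Function.update_self, ← mul_assoc, ← mul_assoc, hX.eq, mul_assoc _ a]

end OrderedProd

namespace BBNCPS

variable (P : BBNCPS B)

def sideScalar (s : Bool) (b : B) : P.A :=
  if s then P.L b else P.R (MulOpposite.op b)

def sideMul (s : Bool) (x : P.A) (β : B) : P.A :=
  if s then x * P.L β else P.R (MulOpposite.op β) * x

variable {P}

lemma E_L_mul (b : B) (X : P.A) : P.E (P.L b * X) = b * P.E X := by
  simpa using P.E_mul b 1 X

lemma E_R_mul (b : B) (X : P.A) : P.E (P.R (MulOpposite.op b) * X) = P.E X * b := by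
  simpa using P.E_mul 1 b X

lemma E_mul_L_of_commute {b : B} {X : P.A} (h : Commute (P.L b) X) :
    P.E (X * P.L b) = b * P.E X := by
  rw [← h.eq, E_L_mul]

lemma E_mul_R_of_commute {b : B} {X : P.A} (h : Commute (P.R (MulOpposite.op b)) X) :
    P.E (X * P.R (MulOpposite.op b)) = P.E X * b := by
  rw [← h.eq, E_R_mul]

lemma sideMul_sideScalar (s : Bool) (b β : B) :
    P.sideMul s (P.sideScalar s b) β = P.sideScalar s (b * β) := by
  cases s <;> simp [sideMul, sideScalar, ← map_mul]

lemma E_sideScalar (hE : P.E 1 = 1) (s : Bool) (b : B) : P.E (P.sideScalar s b) = b := by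
  cases s
  · simpa [sideScalar, hE] using E_R_mul (P := P) b 1
  · simpa [sideScalar, hE] using E_L_mul (P := P) b 1

end BBNCPS

namespace SideOK

variable {P : BBNCPS B} {m n : ℕ} {χ : Fin n → Bool} {Z : Fin n → P.A}

lemma commute_sideScalar (hZ : SideOK P χ Z) {k : Fin n} {s : Bool} (h : χ k ≠ s) (b : B) :
    Commute (P.sideScalar s b) (Z k) := by
  cases s
  · exact ((hZ k).1 (by simpa using h) b).symm
  · exact ((hZ k).2 (by simpa using h) b).symm

lemma comp (hZ : SideOK P χ Z) (f : Fin m → Fin n) : SideOK P (χ ∘ f) (Z ∘ f) :=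
  fun k => hZ (f k)

lemma update_sideMul (hZ : SideOK P χ Z) (p : Fin n) (β : B) :
    SideOK P χ (Function.update Z p (P.sideMul (χ p) (Z p) β)) := by
  intro k
  rcases eq_or_ne k p with rfl | hk
  · simp only [Function.update_self, BBNCPS.sideMul]
    refine ⟨fun hχ c => ?_, fun hχ c => ?_⟩
    · rw [if_pos hχ]
      exact Commute.mul_left ((hZ k).1 hχ c) (P.comm β _)
    · rw [if_neg (by simp [hχ])]
      exact Commute.mul_left (P.comm c _).symm ((hZ k).2 hχ c)
  · simpa only [Function.update_of_ne hk] using hZ k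

end SideOK

/-- `E^B_{π|V}(Z|V)`. -/
def restrictMoment {P : BBNCPS B}
    (Eb : (n : ℕ) → (Fin n → Bool) → Setoid (Fin n) → (Fin n → P.A) → B) {n : ℕ}
    (χ : Fin n → Bool) (π : Setoid (Fin n)) (Z : Fin n → P.A) (V : Finset (Fin n)) : B :=
  Eb V.card (χ ∘ restFin V) (π.comap (restFin V)) (Z ∘ restFin V)

/-- The hypotheses of property (3) for the two pieces `U`, `Uᶜ`. -/
structure IsSplitting {n : ℕ} (χ : Fin n → Bool) (π : Setoid (Fin n)) (U : Finset (Fin n)) :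
    Prop where
  unionOfBlocks : UnionOfBlocks π U
  nonempty : U.Nonempty
  compl_nonempty : Uᶜ.Nonempty
  lt : ∀ x ∈ U, ∀ y ∉ U, chiRank χ x < chiRank χ y

/-- The data of property (4) with `W = Vᶜ`. -/
structure IsNesting {n : ℕ} (χ : Fin n → Bool) (π : Setoid (Fin n)) (V : Finset (Fin n))
    (p : Fin n) : Prop where
  unionOfBlocks : UnionOfBlocks π V
  chiInterval : ChiInterval χ V
  nonempty : V.Nonempty
  exists_gt : ∃ w ∉ V, ∀ v ∈ V, chiRank χ v < chiRank χ w
  notMem : p ∉ V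
  lt : ∀ v ∈ V, chiRank χ p < chiRank χ v
  le_of_lt : ∀ w ∉ V, (∀ v ∈ V, chiRank χ w < chiRank χ v) → chiRank χ w ≤ chiRank χ p

section Splittings

variable {n : ℕ} {χ : Fin n → Bool} {π σ : Setoid (Fin n)} {U : Finset (Fin n)} {p : Fin n}

lemma UnionOfBlocks.mono (hU : UnionOfBlocks σ U) (h : π ≤ σ) : UnionOfBlocks π U :=
  fun x hx y hxy => hU x hx y (h hxy)

lemma UnionOfBlocks.compl (hU : UnionOfBlocks π U) : UnionOfBlocks π Uᶜ := fun x hx y hxy => by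
  simp only [Finset.mem_compl] at hx ⊢
  exact fun hy => hx (hU y hy x (π.symm hxy))

lemma IsSplitting.mono (hU : IsSplitting χ σ U) (h : π ≤ σ) : IsSplitting χ π U :=
  { hU with unionOfBlocks := hU.unionOfBlocks.mono h }

lemma IsNesting.mono (hV : IsNesting χ σ U p) (h : π ≤ σ) : IsNesting χ π U p :=
  { hV with unionOfBlocks := hV.unionOfBlocks.mono h }

lemma IsSplitting.card_lt (hU : IsSplitting χ π U) : U.card < n := by
  obtain ⟨x, hx⟩ := hU.compl_nonempty
  simpa using Finset.card_lt_univ_of_notMem (Finset.mem_compl.1 hx)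

lemma IsSplitting.card_compl_lt (hU : IsSplitting χ π U) : Uᶜ.card < n := by
  obtain ⟨x, hx⟩ := hU.nonempty
  simpa using Finset.card_lt_univ_of_notMem (Finset.notMem_compl.2 hx)

lemma IsNesting.card_lt (hV : IsNesting χ π U p) : U.card < n := by
  simpa using Finset.card_lt_univ_of_notMem hV.notMem

lemma IsNesting.card_compl_lt (hV : IsNesting χ π U p) : Uᶜ.card < n := by
  obtain ⟨x, hx⟩ := hV.nonempty
  simpa using Finset.card_lt_univ_of_notMem (Finset.notMem_compl.2 hx)

end Splittings

section MomentFunction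

variable {P : BBNCPS B} {Eb : (n : ℕ) → (Fin n → Bool) → Setoid (Fin n) → (Fin n → P.A) → B}
  {n : ℕ} {χ : Fin n → Bool} {π : Setoid (Fin n)} {Z : Fin n → P.A}

/-- The empty instance `n = m = 0` of property (3). -/
lemma E_one_of_factorsOverIntervals (hTop : AnchorsTop P Eb) (hFac : FactorsOverIntervals P Eb) :
    P.E 1 = 1 := by
  have h := hFac 0 Fin.elim0 ⊤ Fin.elim0 (fun k => k.elim0) (fun a => a.elim0) 0 Fin.elim0
    (fun k => k.elim0) (fun i => i.elim0) (fun i => i.elim0) (fun i => i.elim0)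
    (fun i => i.elim0)
  rw [hTop] at h
  simpa using h

lemma restrictMoment_of_comap_eq_top (hTop : AnchorsTop P Eb) {V : Finset (Fin n)}
    (h : π.comap (restFin V) = ⊤) : restrictMoment Eb χ π Z V = P.E (orderedProd Z V) := by
  rw [restrictMoment, h, hTop, orderedProd, ← map_restFin_finRange, List.map_map]

lemma restrictMoment_singleton (hTop : AnchorsTop P Eb) (x : Fin n) :
    restrictMoment Eb χ π Z {x} = P.E (Z x) := by
  have : Subsingleton (Fin ({x} : Finset (Fin n)).card) := by
    rw [Finset.card_singleton]; infer_instance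
  rw [restrictMoment_of_comap_eq_top hTop (eq_top_iff.2 fun a b _ =>
    Subsingleton.elim a b ▸ π.refl _),
    orderedProd_singleton]

lemma moment_eq_mul_of_isSplitting (hFac : FactorsOverIntervals P Eb) (hZ : SideOK P χ Z)
    (hπ : IsBNC χ π) {U : Finset (Fin n)} (hU : IsSplitting χ π U) :
    Eb n χ π Z = restrictMoment Eb χ π Z U * restrictMoment Eb χ π Z Uᶜ := by
  have h := hFac n χ π Z hZ hπ 2 ![U, Uᶜ] ?_ ?_ ?_ ?_ ?_
  · simpa [List.finRange_succ, restrictMoment] using h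
  · intro k
    by_cases hk : k ∈ U
    · exact ⟨0, hk, by simp [Fin.forall_fin_two, hk]⟩
    · exact ⟨1, by simpa using hk, by simp [Fin.forall_fin_two, hk]⟩
  · simpa [Fin.forall_fin_two] using ⟨hU.nonempty, hU.compl_nonempty⟩
  · simpa [Fin.forall_fin_two] using ⟨hU.unionOfBlocks, hU.unionOfBlocks.compl⟩
  · refine Fin.forall_fin_two.2 ⟨fun x hx z hz y hxy hyz => ?_, fun x hx z hz y hxy hyz => ?_⟩
    · by_contra hy
      have := hU.lt z hz y hy
      omega
    · simp only [Matrix.cons_val_one, Matrix.cons_val_fin_one, Finset.mem_compl] at hx hz ⊢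
      intro hy
      have := hU.lt y hy x hx
      omega
  · simp only [Fin.forall_fin_two]
    refine ⟨⟨by simp, fun _ x hx y hy => hU.lt x hx y (by simpa using hy)⟩, by simp, by simp⟩

lemma moment_eq_of_isNesting (hNest : NestsOverIntervals P Eb) (hZ : SideOK P χ Z)
    (hπ : IsBNC χ π) {V : Finset (Fin n)} {p : Fin n} (hV : IsNesting χ π V p) :
    Eb n χ π Z = restrictMoment Eb χ π
      (Function.update Z p (P.sideMul (χ p) (Z p) (restrictMoment Eb χ π Z V))) Vᶜ :=
  have ⟨w, hw, hwV⟩ := hV.exists_gt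
  hNest n χ π Z hZ hπ V Vᶜ hV.nonempty ⟨w, Finset.mem_compl.2 hw⟩ disjoint_compl_right
    V.union_compl hV.unionOfBlocks hV.unionOfBlocks.compl hV.chiInterval
    ⟨w, Finset.mem_compl.2 hw, hwV⟩ p (Finset.mem_compl.2 hV.notMem) hV.lt
    fun w hw => hV.le_of_lt w (Finset.mem_compl.1 hw)

end MomentFunction

section ScalarSliding

open Finset

variable {P : BBNCPS B} {n : ℕ} {χ : Fin n → Bool} {Z : Fin n → P.A} {q : Fin n} {b : B}

lemma E_orderedProd_of_isMin (hZ : SideOK P χ Z) (hq : Z q = P.sideScalar (χ q) b)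
    (hmin : ∀ y ≠ q, chiRank χ q < chiRank χ y) :
    P.E (orderedProd Z univ) = b * P.E (orderedProd Z {q}ᶜ) := by
  rw [orderedProd_eq_mul_mul (mem_univ q), compl_singleton, hq]
  cases hχ : χ q
  · have hright : ∀ k ≠ q, χ k = false ∧ k < q := fun k hk => by
      simpa [hχ] using chiRank_lt_iff.1 (hmin k hk)
    have hY : Commute (P.sideScalar false b) (orderedProd Z {x ∈ univ | q < x}) :=
      Commute.orderedProd_right fun k hk => by
        simp only [mem_filter] at hk
        exact absurd (hright k hk.2.ne').2 hk.2.not_gt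
    rw [mul_assoc, hY.eq, ← mul_assoc, ← orderedProd_erase]
    refine (P.E_swap _ b).symm.trans (BBNCPS.E_mul_L_of_commute ?_)
    exact Commute.orderedProd_right fun k hk =>
      hZ.commute_sideScalar (s := true) (by simp [(hright k (ne_of_mem_erase hk)).1]) b
  · have hX : Commute (P.sideScalar true b) (orderedProd Z {x ∈ univ | x < q}) :=
      Commute.orderedProd_right fun k hk => by
        simp only [mem_filter] at hk
        refine hZ.commute_sideScalar ?_ b
        simpa [hχ, hk.2, hk.2.not_gt] using chiRank_lt_iff.1 (hmin k hk.2.ne)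
    rw [← hX.eq, mul_assoc, ← orderedProd_erase]
    exact BBNCPS.E_L_mul b _

lemma E_orderedProd_of_isMax (hZ : SideOK P χ Z) (hq : Z q = P.sideScalar (χ q) b)
    (hmax : ∀ y ≠ q, chiRank χ y < chiRank χ q) :
    P.E (orderedProd Z univ) = P.E (orderedProd Z {q}ᶜ) * b := by
  rw [orderedProd_eq_mul_mul (mem_univ q), compl_singleton, hq]
  cases hχ : χ q
  · have hX : Commute (P.sideScalar false b) (orderedProd Z {x ∈ univ | x < q}) :=
      Commute.orderedProd_right fun k hk => by
        simp only [mem_filter] at hk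
        refine hZ.commute_sideScalar ?_ b
        simpa [hχ, hk.2, hk.2.not_gt] using chiRank_lt_iff.1 (hmax k hk.2.ne)
    rw [← hX.eq, mul_assoc, ← orderedProd_erase]
    exact BBNCPS.E_R_mul b _
  · have hleft : ∀ k ≠ q, χ k = true ∧ k < q := fun k hk => by
      simpa [hχ] using chiRank_lt_iff.1 (hmax k hk)
    have hY : Commute (P.sideScalar true b) (orderedProd Z {x ∈ univ | q < x}) :=
      Commute.orderedProd_right fun k hk => by
        simp only [mem_filter] at hk
        exact absurd (hleft k hk.2.ne').2 hk.2.not_gt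
    rw [mul_assoc, hY.eq, ← mul_assoc, ← orderedProd_erase]
    refine (P.E_swap _ b).trans (BBNCPS.E_mul_R_of_commute ?_)
    exact Commute.orderedProd_right fun k hk =>
      hZ.commute_sideScalar (s := false) (by simp [(hleft k (ne_of_mem_erase hk)).1]) b

lemma orderedProd_of_isPred_of_left (hZ : SideOK P χ Z) (hq : Z q = P.sideScalar (χ q) b)
    (hχ : χ q = true) {p : Fin n} (hpq : chiRank χ p < chiRank χ q)
    (hp : ∀ y, chiRank χ y < chiRank χ q → chiRank χ y ≤ chiRank χ p) :
    orderedProd Z univ = orderedProd (Function.update Z p (P.sideMul (χ p) (Z p) b)) {q}ᶜ := by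
  obtain ⟨hχp, hpq'⟩ : χ p = true ∧ p < q := by simpa [hχ] using chiRank_lt_iff.1 hpq
  have hmid : ∀ k, p < k → k < q → χ k = false := fun k hpk hkq => by
    by_contra hk
    have := hp k (chiRank_lt_of_left_of_left (by simpa using hk) hχ hkq)
    have := chiRank_lt_of_left_of_left hχp (by simpa using hk) hpk
    omega
  rw [orderedProd_eq_mul_mul (mem_univ q), compl_singleton, hq, hχ,
    orderedProd_mul_eq (s := {x ∈ univ | x < q}) (p := p) (by simpa using hpq'),
    orderedProd_erase q,
    orderedProd_update_of_notMem (s := {x ∈ univ | q < x}) (by simpa using hpq'.not_gt), hχp]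
  · rfl
  · intro k hk hpk
    simp only [mem_filter] at hk
    exact hZ.commute_sideScalar (by simp [hmid k hpk hk.2]) b

lemma orderedProd_of_isPred_of_right_of_right (hZ : SideOK P χ Z)
    (hq : Z q = P.sideScalar (χ q) b) (hχ : χ q = false) {p : Fin n} (hχp : χ p = false)
    (hpq : chiRank χ p < chiRank χ q)
    (hp : ∀ y, chiRank χ y < chiRank χ q → chiRank χ y ≤ chiRank χ p) :
    orderedProd Z univ = orderedProd (Function.update Z p (P.sideMul (χ p) (Z p) b)) {q}ᶜ := by
  have hqp : q < p := by simpa [hχ, hχp] using chiRank_lt_iff.1 hpq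
  have hmid : ∀ k, q < k → k < p → χ k = true := fun k hqk hkp => by
    by_contra hk
    have := hp k (chiRank_lt_of_right_of_right (by simpa using hk) hχ hqk)
    have := chiRank_lt_of_right_of_right hχp (by simpa using hk) hkp
    omega
  rw [orderedProd_eq_mul_mul (mem_univ q), compl_singleton, hq, hχ, mul_assoc,
    mul_orderedProd_eq (s := {x ∈ univ | q < x}) (q := p) (by simpa using hqp),
    orderedProd_erase q,
    orderedProd_update_of_notMem (s := {x ∈ univ | x < q}) (by simpa using hqp.not_gt), hχp]
  · rfl
  · intro k hk hkp
    simp only [mem_filter] at hk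
    exact hZ.commute_sideScalar (by simp [hmid k hk.2 hkp]) b

/-- Here no right follows `q`: `R_b` moves to the end of the word, turns into `L_b` under `E`, and
moves back to the last left `p`. -/
lemma E_orderedProd_of_isPred_of_right_of_left (hZ : SideOK P χ Z)
    (hq : Z q = P.sideScalar (χ q) b) (hχ : χ q = false) {p : Fin n} (hχp : χ p = true)
    (hpq : chiRank χ p < chiRank χ q)
    (hp : ∀ y, chiRank χ y < chiRank χ q → chiRank χ y ≤ chiRank χ p) :
    P.E (orderedProd Z univ) =
      P.E (orderedProd (Function.update Z p (P.sideMul (χ p) (Z p) b)) {q}ᶜ) := by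
  have hpq' : p ≠ q := fun h => by subst h; omega
  have hleft : ∀ k, q < k → χ k = true := fun k hqk => by
    by_contra hk
    have := hp k (chiRank_lt_of_right_of_right (by simpa using hk) hχ hqk)
    have := chiRank_lt_of_left_of_right hχp (by simpa using hk)
    omega
  have hright : ∀ k, p < k → k ≠ q → χ k = false := fun k hpk hkq => by
    by_contra hk
    have := hp k (chiRank_lt_of_left_of_right (by simpa using hk) hχ)
    have := chiRank_lt_of_left_of_left hχp (by simpa using hk) hpk
    omega
  have hY : Commute (P.sideScalar false b) (orderedProd Z {x ∈ univ | q < x}) :=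
    Commute.orderedProd_right fun k hk => by
      simp only [mem_filter] at hk
      exact hZ.commute_sideScalar (by simp [hleft k hk.2]) b
  rw [orderedProd_eq_mul_mul (mem_univ q), compl_singleton, hq, hχ, mul_assoc, hY.eq,
    ← mul_assoc, ← orderedProd_erase, hχp]
  refine (P.E_swap _ b).symm.trans (congrArg P.E (orderedProd_mul_eq (by simpa using hpq')
    fun k hk hpk => ?_))
  exact hZ.commute_sideScalar (s := true) (by simp [hright k hpk (ne_of_mem_erase hk)]) b

lemma E_orderedProd_of_isPred (hZ : SideOK P χ Z) (hq : Z q = P.sideScalar (χ q) b) {p : Fin n}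
    (hpq : chiRank χ p < chiRank χ q)
    (hp : ∀ y, chiRank χ y < chiRank χ q → chiRank χ y ≤ chiRank χ p) :
    P.E (orderedProd Z univ) =
      P.E (orderedProd (Function.update Z p (P.sideMul (χ p) (Z p) b)) {q}ᶜ) := by
  cases hχ : χ q
  · rcases Bool.eq_false_or_eq_true (χ p) with hχp | hχp
    · exact E_orderedProd_of_isPred_of_right_of_left hZ hq hχ hχp hpq hp
    · rw [orderedProd_of_isPred_of_right_of_right hZ hq hχ hχp hpq hp]
  · rw [orderedProd_of_isPred_of_left hZ hq hχ hpq hp]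

end ScalarSliding

section Singleton

open Finset

variable {n : ℕ} {χ : Fin n → Bool} {σ : Setoid (Fin n)} {q : Fin n}

lemma unionOfBlocks_isolate_singleton : UnionOfBlocks (σ.isolate q) {q} := by
  rintro x hx y (rfl | ⟨hxq, -, -⟩)
  exacts [hx, absurd (mem_singleton.1 hx) hxq]

lemma chiInterval_singleton : ChiInterval χ {q} := by
  intro x hx z hz y hxy hyz
  rw [mem_singleton] at hx hz ⊢
  subst hx hz
  exact chiRank_injective (le_antisymm hyz hxy)

lemma isSplitting_singleton (hmin : ∀ y ≠ q, chiRank χ q < chiRank χ y) {x : Fin n}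
    (hxq : x ≠ q) : IsSplitting χ (σ.isolate q) {q} :=
  ⟨unionOfBlocks_isolate_singleton, singleton_nonempty q, ⟨x, by simpa using hxq⟩,
    fun y hy z hz => by
      rw [mem_singleton] at hy hz
      exact hy ▸ hmin z hz⟩

lemma isSplitting_compl_singleton (hmax : ∀ y ≠ q, chiRank χ y < chiRank χ q) {x : Fin n}
    (hxq : x ≠ q) : IsSplitting χ (σ.isolate q) {q}ᶜ :=
  ⟨unionOfBlocks_isolate_singleton.compl, ⟨x, by simpa using hxq⟩, by simp,
    fun y hy z hz => by
      rw [mem_compl, mem_singleton] at hy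
      rw [mem_compl, mem_singleton, not_not] at hz
      exact hz ▸ hmax y hy⟩

lemma isNesting_singleton {p z : Fin n} (hpq : chiRank χ p < chiRank χ q)
    (hp : ∀ y, chiRank χ y < chiRank χ q → chiRank χ y ≤ chiRank χ p)
    (hqz : chiRank χ q < chiRank χ z) : IsNesting χ (σ.isolate q) {q} p :=
  ⟨unionOfBlocks_isolate_singleton, chiInterval_singleton, singleton_nonempty q,
    ⟨z, by simpa using fun h => by subst h; omega, by simpa using hqz⟩,
    by simpa using fun h => by subst h; omega, by simpa using hpq,
    fun w _ hw => hp w (hw q (mem_singleton_self q))⟩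

end Singleton

section TopCase

open Finset

variable {P : BBNCPS B} {Eb : (n : ℕ) → (Fin n → Bool) → Setoid (Fin n) → (Fin n → P.A) → B}
  {n : ℕ} {χ : Fin n → Bool} {Z : Fin n → P.A} {q : Fin n} {b : B}

lemma moment_isolate_top (hTop : AnchorsTop P Eb) (hFac : FactorsOverIntervals P Eb)
    (hNest : NestsOverIntervals P Eb) (hZ : SideOK P χ Z) (hq : Z q = P.sideScalar (χ q) b)
    {x : Fin n} (hxq : x ≠ q) :
    Eb n χ ((⊤ : Setoid (Fin n)).isolate q) Z = Eb n χ ⊤ Z := by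
  rw [hTop, ← orderedProd_univ]
  have hE := E_one_of_factorsOverIntervals hTop hFac
  have hπ : IsBNC χ ((⊤ : Setoid (Fin n)).isolate q) := isBNC_top.isolate q
  have hrest : ∀ Z' : Fin n → P.A, restrictMoment Eb χ ((⊤ : Setoid (Fin n)).isolate q) Z' {q}ᶜ =
      P.E (orderedProd Z' {q}ᶜ) := fun Z' =>
    restrictMoment_of_comap_eq_top hTop <| by
      rw [Setoid.comap_isolate_of_forall_ne fun a => by simpa using restFin_mem {q}ᶜ a]
      exact eq_top_iff.2 fun _ _ _ => trivial
  by_cases hmin : ∀ y ≠ q, chiRank χ q < chiRank χ y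
  · rw [moment_eq_mul_of_isSplitting hFac hZ hπ (isSplitting_singleton hmin hxq),
      restrictMoment_singleton hTop, hq, BBNCPS.E_sideScalar hE, hrest,
      E_orderedProd_of_isMin hZ hq hmin]
  by_cases hmax : ∀ y ≠ q, chiRank χ y < chiRank χ q
  · rw [moment_eq_mul_of_isSplitting hFac hZ hπ (isSplitting_compl_singleton hmax hxq),
      compl_compl, restrictMoment_singleton hTop, hq, BBNCPS.E_sideScalar hE, hrest,
      E_orderedProd_of_isMax hZ hq hmax]
  push Not at hmin hmax
  obtain ⟨y, hyq, hy⟩ := hmin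
  obtain ⟨z, hzq, hz⟩ := hmax
  have hyq' : chiRank χ y < chiRank χ q := lt_of_le_of_ne hy fun h => hyq (chiRank_injective h)
  have hqz : chiRank χ q < chiRank χ z :=
    lt_of_le_of_ne hz fun h => hzq (chiRank_injective h).symm
  obtain ⟨p, hp, hpmax⟩ := exists_max_image {y | chiRank χ y < chiRank χ q} (chiRank χ)
    ⟨y, by simpa using hyq'⟩
  simp only [mem_filter, mem_univ, true_and] at hp hpmax
  rw [moment_eq_of_isNesting hNest hZ hπ (isNesting_singleton hp hpmax hqz),
    restrictMoment_singleton hTop, hq, BBNCPS.E_sideScalar hE, hrest,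
    E_orderedProd_of_isPred hZ hq hp hpmax]

end TopCase

section Decomposition

open Finset

variable {n : ℕ} {χ : Fin n → Bool} {σ : Setoid (Fin n)} {w y : Fin n}

/-- The positions strictly between `w` and the next element of its block in the `≺_χ` order. -/
def blockGap (χ : Fin n → Bool) (σ : Setoid (Fin n)) (w : Fin n) : Finset (Fin n) :=
  {y | chiRank χ w < chiRank χ y ∧
    ∀ u, σ.r w u → chiRank χ u ≤ chiRank χ w ∨ chiRank χ y < chiRank χ u}

lemma mem_blockGap : y ∈ blockGap χ σ w ↔ chiRank χ w < chiRank χ y ∧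
    ∀ u, σ.r w u → chiRank χ u ≤ chiRank χ w ∨ chiRank χ y < chiRank χ u := by
  simp [blockGap]

lemma mem_blockGap_of_le (hy : y ∈ blockGap χ σ w) {y' : Fin n}
    (hwy' : chiRank χ w < chiRank χ y') (hy'y : chiRank χ y' ≤ chiRank χ y) :
    y' ∈ blockGap χ σ w := by
  rw [mem_blockGap] at hy ⊢
  exact ⟨hwy', fun u hu => (hy.2 u hu).imp_right hy'y.trans_lt⟩

lemma not_rel_of_mem_blockGap (hy : y ∈ blockGap χ σ w) : ¬ σ.r w y := fun h => by
  have := (mem_blockGap.1 hy).2 y h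
  have := (mem_blockGap.1 hy).1
  omega

lemma chiInterval_blockGap : ChiInterval χ (blockGap χ σ w) := fun _ hx _ hz _ hxy hyz =>
  mem_blockGap_of_le hz ((mem_blockGap.1 hx).1.trans_le hxy) hyz

/-- A block leaving the gap backwards would cross the block of `w`, which reaches back to the
`≺_χ`-minimum `x₀`. -/
lemma unionOfBlocks_blockGap (hσ : IsBNC χ σ) {x₀ : Fin n}
    (hx₀ : ∀ y, chiRank χ x₀ ≤ chiRank χ y) (hw : σ.r x₀ w) :
    UnionOfBlocks σ (blockGap χ σ w) := by
  intro x hx y hxy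
  have hwx := not_rel_of_mem_blockGap hx
  have hwy : ¬ σ.r w y := fun h => hwx (σ.trans h (σ.symm hxy))
  have hne : ∀ u, σ.r w u → chiRank χ u ≠ chiRank χ y := fun u hu h =>
    hwy (chiRank_injective h ▸ hu)
  refine mem_blockGap.2 ⟨?_, fun u hwu => ?_⟩
  · by_contra hyw
    have hyw : chiRank χ y < chiRank χ w := lt_of_le_of_ne (not_lt.1 hyw) (hne w (σ.refl w)).symm
    have hx₀y : chiRank χ x₀ < chiRank χ y :=
      lt_of_le_of_ne (hx₀ y) (hne x₀ (σ.symm hw))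
    exact hwy (σ.trans (σ.symm hw)
      (hσ x₀ y w x hx₀y hyw (mem_blockGap.1 hx).1 hw (σ.symm hxy)))
  · by_contra hu
    push Not at hu
    have hxu := ((mem_blockGap.1 hx).2 u hwu).resolve_left hu.1.not_ge
    exact hwx (hσ w x u y (mem_blockGap.1 hx).1 hxu
      (lt_of_le_of_ne hu.2 (hne u hwu)) hwu hxy)

lemma exists_isSplitting_or_isNesting (hσ : IsBNC χ σ) (hne : σ ≠ ⊤) :
    (∃ U, IsSplitting χ σ U) ∨ ∃ V p, IsNesting χ σ V p := by
  obtain ⟨a, c, hac⟩ : ∃ a c, ¬ σ.r a c := by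
    by_contra h
    push Not at h
    exact hne (eq_top_iff.2 fun a c _ => h a c)
  obtain ⟨x₀, -, hx₀⟩ := exists_min_image univ (chiRank χ) ⟨a, mem_univ a⟩
  replace hx₀ : ∀ y, chiRank χ x₀ ≤ chiRank χ y := fun y => hx₀ y (mem_univ y)
  obtain ⟨z, hz⟩ : ∃ z, ¬ σ.r x₀ z := by
    by_contra h
    push Not at h
    exact hac (σ.trans (σ.symm (h a)) (h c))
  have hx₀z : chiRank χ x₀ < chiRank χ z :=
    lt_of_le_of_ne (hx₀ z) fun h => hz (chiRank_injective h ▸ σ.refl x₀)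
  obtain ⟨w, hw, hwmax⟩ := exists_max_image {u | σ.r x₀ u ∧ chiRank χ u < chiRank χ z}
    (chiRank χ) ⟨x₀, by simpa [σ.refl x₀] using hx₀z⟩
  simp only [mem_filter, mem_univ, true_and, and_imp] at hw hwmax
  have hzV : z ∈ blockGap χ σ w := by
    refine mem_blockGap.2 ⟨hw.2, fun u hwu => ?_⟩
    have hx₀u := σ.trans hw.1 hwu
    rcases lt_or_ge (chiRank χ u) (chiRank χ z) with hu | hu
    · exact Or.inl (hwmax u hx₀u hu)
    · exact Or.inr (lt_of_le_of_ne hu fun h => hz (chiRank_injective h ▸ hx₀u))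
  have hV := unionOfBlocks_blockGap hσ hx₀ hw.1
  have hwV : w ∉ blockGap χ σ w := fun h => not_rel_of_mem_blockGap h (σ.refl w)
  by_cases hlast : ∃ u, σ.r w u ∧ chiRank χ w < chiRank χ u
  · obtain ⟨u, hwu, hu⟩ := hlast
    refine Or.inr ⟨_, w, hV, chiInterval_blockGap, ⟨z, hzV⟩,
      ⟨u, fun huV => not_rel_of_mem_blockGap huV hwu, fun v hv =>
        ((mem_blockGap.1 hv).2 u hwu).resolve_left hu.not_ge⟩,
      hwV, fun v hv => (mem_blockGap.1 hv).1, fun w' hw' hlt => ?_⟩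
    by_contra h
    exact hw' (mem_blockGap_of_le hzV (not_le.1 h) (hlt z hzV).le)
  · push Not at hlast
    refine Or.inl ⟨_, hV.compl, ⟨w, mem_compl.2 hwV⟩, ⟨z, by rwa [compl_compl]⟩,
      fun x hx y hy => ?_⟩
    rw [mem_compl, mem_blockGap] at hx
    rw [mem_compl, not_not] at hy
    have hxw : chiRank χ x ≤ chiRank χ w := by
      by_contra h
      exact hx ⟨not_le.1 h, fun u hwu => Or.inl (hlast u hwu)⟩
    exact hxw.trans_lt (mem_blockGap.1 hy).1

end Decomposition

def IsolationInvariant (P : BBNCPS B)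
    (Eb : (n : ℕ) → (Fin n → Bool) → Setoid (Fin n) → (Fin n → P.A) → B) (n : ℕ) : Prop :=
  ∀ (χ : Fin n → Bool) (Z : Fin n → P.A) (σ : Setoid (Fin n)) (q : Fin n) (b : B),
    SideOK P χ Z → IsBNC χ σ → Z q = P.sideScalar (χ q) b → Eb n χ σ Z = Eb n χ (σ.isolate q) Z

section Isolation

variable {P : BBNCPS B} {Eb : (n : ℕ) → (Fin n → Bool) → Setoid (Fin n) → (Fin n → P.A) → B}
  {n : ℕ} {χ : Fin n → Bool} {σ : Setoid (Fin n)} {Z : Fin n → P.A} {q : Fin n} {b : B}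

lemma restrictMoment_isolate {V : Finset (Fin n)} (IH : IsolationInvariant P Eb V.card)
    (hZ : SideOK P χ Z) (hσ : IsBNC χ σ) (hq : Z q = P.sideScalar (χ q) b) :
    restrictMoment Eb χ (σ.isolate q) Z V = restrictMoment Eb χ σ Z V := by
  by_cases hqV : q ∈ V
  · obtain ⟨a, rfl⟩ := exists_restFin_eq hqV
    rw [restrictMoment, restrictMoment,
      Setoid.comap_isolate_of_apply_eq (restFin_strictMono V).injective rfl]
    exact (IH _ _ _ a b (hZ.comp _) (hσ.comap (restFin_strictMono V)) hq).symm
  · rw [restrictMoment, restrictMoment,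
      Setoid.comap_isolate_of_forall_ne fun a (h : restFin V a = q) => hqV (h ▸ restFin_mem V a)]

lemma exists_update_sideMul_eq_sideScalar (hq : Z q = P.sideScalar (χ q) b) (p : Fin n)
    (β : B) : ∃ b', Function.update Z p (P.sideMul (χ p) (Z p) β) q = P.sideScalar (χ q) b' := by
  rcases eq_or_ne q p with rfl | hqp
  · exact ⟨b * β, by rw [Function.update_self, hq, BBNCPS.sideMul_sideScalar]⟩
  · exact ⟨b, by rw [Function.update_of_ne hqp, hq]⟩

theorem isolationInvariant (hTop : AnchorsTop P Eb) (hFac : FactorsOverIntervals P Eb)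
    (hNest : NestsOverIntervals P Eb) (n : ℕ) : IsolationInvariant P Eb n := by
  induction n using Nat.strong_induction_on with
  | _ n IH =>
  intro χ Z σ q b hZ hσ hq
  rcases eq_or_ne σ ⊤ with rfl | hne
  · by_cases h : ∃ x, x ≠ q
    · obtain ⟨x, hx⟩ := h
      exact (moment_isolate_top hTop hFac hNest hZ hq hx).symm
    · push Not at h
      have : Subsingleton (Fin n) := ⟨fun x y => (h x).trans (h y).symm⟩
      rw [Setoid.isolate_eq_self]
  rcases exists_isSplitting_or_isNesting hσ hne with ⟨U, hU⟩ | ⟨V, p, hV⟩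
  · rw [moment_eq_mul_of_isSplitting hFac hZ hσ hU,
      moment_eq_mul_of_isSplitting hFac hZ (hσ.isolate q) (hU.mono Setoid.isolate_le),
      restrictMoment_isolate (IH _ hU.card_lt) hZ hσ hq,
      restrictMoment_isolate (IH _ hU.card_compl_lt) hZ hσ hq]
  · obtain ⟨b', hb'⟩ := exists_update_sideMul_eq_sideScalar hq p (restrictMoment Eb χ σ Z V)
    rw [moment_eq_of_isNesting hNest hZ hσ hV,
      moment_eq_of_isNesting hNest hZ (hσ.isolate q) (hV.mono Setoid.isolate_le),
      restrictMoment_isolate (IH _ hV.card_lt) hZ hσ hq,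
      restrictMoment_isolate (IH _ hV.card_compl_lt) (hZ.update_sideMul _ _) hσ hb']

end Isolation

section KernelOperator

open Finset

variable {α M : Type*} [PartialOrder α] [OrderTop α] [Fintype α] [AddCommMonoid M]
  {A : Finset α} {μ : α → M} {f : α → α}

/-- The upper set `{σ ≥ τ}` of a fixed point `τ` of `f` is the union of the fibres of `f` over
the fixed points `τ' ≥ τ`, so downward induction on `τ` kills every fibre sum. -/
theorem sum_fiber_eq_zero_of_sum_Ici_eq_zero
    (hμ : ∀ τ ∈ A, τ ≠ ⊤ → ∑ σ ∈ A with τ ≤ σ, μ σ = 0) (hA : ∀ σ ∈ A, f σ ∈ A)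
    (hle : ∀ σ, f σ ≤ σ) (hidem : ∀ σ, f (f σ) = f σ) (hmono : Monotone f) (htop : f ⊤ ≠ ⊤)
    (τ : α) : ∑ σ ∈ A with f σ = τ, μ σ = 0 := by
  induction τ using WellFoundedGT.induction with
  | _ τ IH =>
  by_cases hfib : ∃ σ ∈ A, f σ = τ
  swap
  · push Not at hfib
    exact sum_eq_zero fun σ hσ => absurd (mem_filter.1 hσ).2 (hfib σ (mem_filter.1 hσ).1)
  obtain ⟨σ₀, hσ₀, hσ₀τ⟩ := hfib
  have hτA : τ ∈ A := hσ₀τ ▸ hA σ₀ hσ₀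
  have hfix : f τ = τ := hσ₀τ ▸ hidem σ₀
  have hτtop : τ ≠ ⊤ := fun h => htop (h ▸ hfix)
  have hfiber : ∀ τ', τ ≤ τ' → ({σ ∈ A | τ ≤ σ} : Finset α).filter (f · = τ') =
      {σ ∈ A | f σ = τ'} := fun τ' hττ' => by
    ext σ
    simp only [mem_filter, and_congr_left_iff, and_iff_left_iff_imp]
    exact fun hστ' _ => hττ'.trans (hστ' ▸ hle σ)
  have hother : ∀ τ' ≠ τ, ∑ σ ∈ ({σ ∈ A | τ ≤ σ} : Finset α).filter (f · = τ'), μ σ = 0 := by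
    intro τ' hτ'
    by_cases hττ' : τ ≤ τ'
    · rw [hfiber τ' hττ']
      exact IH τ' (lt_of_le_of_ne hττ' (Ne.symm hτ'))
    · refine sum_eq_zero fun σ hσ => absurd ?_ hττ'
      simp only [mem_filter] at hσ
      exact hσ.2 ▸ hfix ▸ hmono hσ.1.2
  calc ∑ σ ∈ A with f σ = τ, μ σ
      = ∑ τ', ∑ σ ∈ ({σ ∈ A | τ ≤ σ} : Finset α).filter (f · = τ'), μ σ := by
        rw [← hfiber τ le_rfl]
        exact (sum_eq_single τ (fun τ' _ hτ' => hother τ' hτ') (by simp)).symm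
    _ = ∑ σ ∈ A with τ ≤ σ, μ σ := sum_fiberwise _ _ _
    _ = 0 := hμ τ hτA hτtop

theorem sum_smul_comp_eq_zero_of_sum_Ici_eq_zero {R N : Type*} [Semiring R] [AddCommMonoid N]
    [Module R N] {μ : α → R} (hμ : ∀ τ ∈ A, τ ≠ ⊤ → ∑ σ ∈ A with τ ≤ σ, μ σ = 0)
    (hA : ∀ σ ∈ A, f σ ∈ A) (hle : ∀ σ, f σ ≤ σ) (hidem : ∀ σ, f (f σ) = f σ)
    (hmono : Monotone f) (htop : f ⊤ ≠ ⊤) (g : α → N) : ∑ σ ∈ A, μ σ • g (f σ) = 0 := by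
  rw [← sum_fiberwise A f]
  refine sum_eq_zero fun τ _ => ?_
  rw [sum_congr rfl fun σ hσ => by rw [(mem_filter.1 hσ).2], ← sum_smul,
    sum_fiber_eq_zero_of_sum_Ici_eq_zero hμ hA hle hidem hmono htop τ, zero_smul]

end KernelOperator

lemma MoebiusBNC.sum_ge_eq_zero
    {μ : (n : ℕ) → (Fin n → Bool) → Setoid (Fin n) → Setoid (Fin n) → ℂ} (hμ : MoebiusBNC μ)
    {n : ℕ} {χ : Fin n → Bool} {τ : Setoid (Fin n)} (hτ : IsBNC χ τ) (hne : τ ≠ ⊤) :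
    ∑ σ ∈ ({σ | IsBNC χ σ} : Finset (Setoid (Fin n))) with τ ≤ σ, μ n χ σ ⊤ = 0 := by
  have h := hμ.2.1 n χ τ ⊤ hτ isBNC_top le_top
  rw [if_neg hne, show {σ | IsBNC χ σ ∧ τ ≤ σ ∧ σ ≤ ⊤} =
    ↑({σ | IsBNC χ σ ∧ τ ≤ σ} : Finset (Setoid (Fin n))) by simp, finsum_mem_coe_finset] at h
  rwa [Finset.filter_filter]

/-- Let `(A, E, ε)` be a `B`-`B`-non-commutative probability space and
let `χ : {1,…,n} → {ℓ,r}` with `n ≥ 2`.  If there exist `q` and `b ∈ B` such that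
`Z_q = L_b` when `χ(q) = ℓ`, or `Z_q = R_b` when `χ(q) = r`, then the full operator-valued
bi-free cumulant vanishes: `κ^B_χ(Z₁,…,Z_n) = 0` for all `Z_k ∈ A_{χ(k)}`.

Here the cumulant is `κ^B_χ(Z) = Σ_{σ ∈ BNC(χ)} μ_BNC(σ, 1_χ) E^B_σ(Z)`, where `E^B` is
the bi-multiplicative operator-valued bi-free moment function (hypothesized via its
characterizing properties `AnchorsTop`, `FactorsOverIntervals`, `NestsOverIntervals`) and
`μ` is the bi-non-crossing Möbius function (hypothesized via `MoebiusBNC`). -/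
theorem stmt18 (P : BBNCPS B)
    (Eb : (n : ℕ) → (Fin n → Bool) → Setoid (Fin n) → (Fin n → P.A) → B)
    (μ : (n : ℕ) → (Fin n → Bool) → Setoid (Fin n) → Setoid (Fin n) → ℂ)
    (hTop : AnchorsTop P Eb) (hFac : FactorsOverIntervals P Eb)
    (hNest : NestsOverIntervals P Eb) (hμ : MoebiusBNC μ)
    (n : ℕ) (hn : 2 ≤ n) (χ : Fin n → Bool) (Z : Fin n → P.A)
    (hZ : SideOK P χ Z) (q : Fin n) (b : B)
    (hq : (χ q = true ∧ Z q = P.L b) ∨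
          (χ q = false ∧ Z q = P.R (MulOpposite.op b))) :
    (∑ᶠ σ ∈ {σ : Setoid (Fin n) | IsBNC χ σ}, μ n χ σ ⊤ • Eb n χ σ Z) = 0 := by
  have hq' : Z q = P.sideScalar (χ q) b := by
    rcases hq with ⟨hχ, h⟩ | ⟨hχ, h⟩ <;> simp [BBNCPS.sideScalar, hχ, h]
  have : Nontrivial (Fin n) := Fin.nontrivial_iff_two_le.2 hn
  rw [show {σ : Setoid (Fin n) | IsBNC χ σ} = ↑({σ | IsBNC χ σ} : Finset (Setoid (Fin n))) by
    simp, finsum_mem_coe_finset]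
  calc ∑ σ ∈ {σ | IsBNC χ σ}, μ n χ σ ⊤ • Eb n χ σ Z
      = ∑ σ ∈ {σ | IsBNC χ σ}, μ n χ σ ⊤ • Eb n χ (σ.isolate q) Z :=
        Finset.sum_congr rfl fun σ hσ => by
          rw [isolationInvariant hTop hFac hNest n χ Z σ q b hZ (by simpa using hσ) hq']
    _ = 0 := sum_smul_comp_eq_zero_of_sum_Ici_eq_zero
        (fun τ hτ => hμ.sum_ge_eq_zero (by simpa using hτ))
        (fun σ hσ => by simpa using (show IsBNC χ σ by simpa using hσ).isolate q)
        (fun _ => Setoid.isolate_le) (fun _ => Setoid.isolate_isolate) Setoid.isolate_mono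
        (Setoid.isolate_top_ne_top q) (fun σ => Eb n χ σ Z)

end
end
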